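/- Let $X$ be a compact metric space and $f:X\to X$ a continuous map. For every $x\in X$ and $m\ge1$, it holds that $\overline{\omega}(x,f)=\bigcup_{i=0}^{m-1}\overline{\omega}(f^i(x),f^m)$. -/

import Mathlib

/-!
The times `k` with `f^[k] x ∈ B_ε(y)` lying in the residue class `i` mod `m` are exactly
`m * j + i` for the times `j` with `(f^[m])^[j] (f^[i] x) ∈ B_ε(y)`. A set `A ⊆ ℕ` has positive
upper density iff one of its slices `{j | m * j + i ∈ A}` does, since counting in `[0, n)` and in
`[0, m n)` compares the two densities up to a factor `m`. So for every `ε` some residue `i` works;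
as positivity only improves when `ε` grows, a single `i` works for all small `ε`, hence for all `ε`.
-/

open Filter Metric Set
open scoped Classical Topology

noncomputable def upperDensity (A : Set ℕ) : ℝ :=
  Filter.limsup
    (fun n : ℕ => (((Finset.range n).filter (fun i => i ∈ A)).card : ℝ) / n) Filter.atTop

def HasDensityOne (A : Set ℕ) : Prop :=
  Filter.Tendsto
    (fun n : ℕ => (((Finset.range n).filter (fun i => i ∈ A)).card : ℝ) / n) Filter.atTop (nhds 1)

def omegaBarSeq {X : Type*} [MetricSpace X] (x : ℕ → X) : Set X :=
  {y | ∀ ε > 0, 0 < upperDensity {i | dist (x i) y < ε}}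

def omegaBar {X : Type*} [MetricSpace X] (f : X → X) (x : X) : Set X :=
  omegaBarSeq (fun i => f^[i] x)

namespace Finset

lemma card_filter_mem_le_sum_residues (A : Set ℕ) {m : ℕ} (hm : 0 < m) (n : ℕ) :
    #{k ∈ range n | k ∈ A} ≤ ∑ i ∈ range m, #{j ∈ range n | m * j + i ∈ A} := by
  rw [card_eq_sum_card_fiberwise (f := (· % m)) (t := range m)
    fun k _ => mem_coe.2 (mem_range.2 (Nat.mod_lt k hm))]
  refine sum_le_sum fun i _ => card_le_card_of_injOn (· / m) ?_ ?_
  · intro k hk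
    simp only [coe_filter, mem_filter, mem_range, Set.mem_ofPred_eq] at hk ⊢
    obtain ⟨⟨hkn, hkA⟩, rfl⟩ := hk
    exact ⟨(Nat.div_le_self k m).trans_lt hkn, by rwa [Nat.div_add_mod]⟩
  · intro k hk k' hk' hkk'
    simp only [coe_filter, mem_filter, Set.mem_ofPred_eq] at hk hk'
    rw [← Nat.div_add_mod k m, ← Nat.div_add_mod k' m, hk.2, hk'.2]
    exact congrArg (m * · + i) hkk'

lemma card_filter_residue_le (A : Set ℕ) {m i : ℕ} (hi : i < m) (N : ℕ) :
    #{j ∈ range N | m * j + i ∈ A} ≤ #{k ∈ range (m * N) | k ∈ A} := by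
  refine card_le_card_of_injOn (m * · + i) (fun j hj => ?_) fun j _ j' _ h => ?_
  · simp only [coe_filter, mem_range, Set.mem_ofPred_eq] at hj ⊢
    refine ⟨?_, hj.2⟩
    calc m * j + i < m * (j + 1) := by rw [mul_add_one]; omega
      _ ≤ m * N := Nat.mul_le_mul_left m hj.1
  · exact Nat.eq_of_mul_eq_mul_left (by omega) (Nat.add_right_cancel h)

end Finset

section Density

open Finset

noncomputable def partialDensity (A : Set ℕ) (n : ℕ) : ℝ := #{k ∈ range n | k ∈ A} / n

lemma upperDensity_eq_limsup (A : Set ℕ) : upperDensity A = limsup (partialDensity A) atTop := rfl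

lemma partialDensity_nonneg (A : Set ℕ) (n : ℕ) : 0 ≤ partialDensity A n := by
  unfold partialDensity; positivity

lemma partialDensity_le_one (A : Set ℕ) (n : ℕ) : partialDensity A n ≤ 1 :=
  div_le_one_of_le₀ (by exact_mod_cast (card_filter_le _ _).trans (card_range n).le) n.cast_nonneg

lemma upperDensity_mono {A B : Set ℕ} (h : A ⊆ B) : upperDensity A ≤ upperDensity B :=
  limsup_le_limsup
    (Eventually.of_forall fun n => div_le_div_of_nonneg_right
      (by exact_mod_cast Finset.card_le_card (monotone_filter_right _ fun k _ hk => h hk))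
      n.cast_nonneg)
    (isCoboundedUnder_le_of_le atTop (partialDensity_nonneg A))
    (isBoundedUnder_of ⟨1, partialDensity_le_one B⟩)

lemma upperDensity_pos_iff {A : Set ℕ} :
    0 < upperDensity A ↔ ∃ δ > 0, ∃ᶠ n in atTop, δ ≤ partialDensity A n := by
  rw [upperDensity_eq_limsup]
  constructor
  · intro h
    refine ⟨limsup (partialDensity A) atTop / 2, half_pos h, ?_⟩
    exact (frequently_lt_of_lt_limsup (isCoboundedUnder_le_of_le atTop (partialDensity_nonneg A))
      (half_lt_self h)).mono fun n hn => hn.le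
  · rintro ⟨δ, hδ, hfreq⟩
    exact hδ.trans_le
      (le_limsup_of_frequently_le hfreq (isBoundedUnder_of ⟨1, partialDensity_le_one A⟩))

lemma partialDensity_le_sum_residues (A : Set ℕ) {m : ℕ} (hm : 0 < m) (n : ℕ) :
    partialDensity A n ≤ ∑ i ∈ range m, partialDensity {j | m * j + i ∈ A} n := by
  unfold partialDensity
  rw [← sum_div]
  gcongr
  exact_mod_cast card_filter_mem_le_sum_residues A hm n

lemma partialDensity_residue_le (A : Set ℕ) {m i : ℕ} (hi : i < m) (N : ℕ) :
    partialDensity {j | m * j + i ∈ A} N ≤ m * partialDensity A (m * N) := by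
  have hm : (m : ℝ) ≠ 0 := by exact_mod_cast (Nat.zero_le i).trans_lt hi |>.ne'
  unfold partialDensity
  rw [Nat.cast_mul, ← mul_div_assoc, mul_div_mul_left _ _ hm]
  exact div_le_div_of_nonneg_right (by exact_mod_cast card_filter_residue_le A hi N) N.cast_nonneg

lemma upperDensity_pos_iff_exists_residue (A : Set ℕ) {m : ℕ} (hm : 0 < m) :
    0 < upperDensity A ↔ ∃ i ∈ range m, 0 < upperDensity {j | m * j + i ∈ A} := by
  have hm' : (0 : ℝ) < m := by exact_mod_cast hm
  simp only [upperDensity_pos_iff]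
  constructor
  · rintro ⟨δ, hδ, hfreq⟩
    have hfreq_some :
        ∃ᶠ n in atTop, ∃ i ∈ range m, δ / m ≤ partialDensity {j | m * j + i ∈ A} n := by
      refine hfreq.mono fun n hn => exists_le_of_sum_le (nonempty_range_iff.2 hm.ne') ?_
      rw [sum_const, card_range, nsmul_eq_mul, mul_div_cancel₀ _ hm'.ne']
      exact hn.trans (partialDensity_le_sum_residues A hm n)
    obtain ⟨i, hi, hfreq_i⟩ := frequently_exists_finset _ |>.1 hfreq_some
    exact ⟨i, hi, δ / m, div_pos hδ hm', hfreq_i⟩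
  · rintro ⟨i, hi, δ, hδ, hfreq⟩
    refine ⟨δ / m, div_pos hδ hm', (tendsto_id.const_mul_atTop' hm).frequently ?_⟩
    exact hfreq.mono fun N hN =>
      (div_le_iff₀' hm').2 (hN.trans (partialDensity_residue_le A (mem_range.1 hi) N))

end Density

lemma exists_forall_pos_of_forall_pos_exists {ι : Type*} {s : Finset ι} {Q : ι → ℝ → Prop}
    (hQ : ∀ i, Monotone (Q i)) (h : ∀ ε > 0, ∃ i ∈ s, Q i ε) : ∃ i ∈ s, ∀ ε > 0, Q i ε := by
  by_contra! hne
  have hsmall : ∀ᶠ ε in 𝓝[>] (0 : ℝ), 0 < ε ∧ ∀ i ∈ s, ¬Q i ε := by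
    refine (eventually_mem_nhdsWithin (s := Ioi 0)).and ((s.eventually_all).2 fun i hi => ?_)
    obtain ⟨ε, hε, hQε⟩ := hne i hi
    filter_upwards [Ioo_mem_nhdsGT hε] with δ hδ using fun hQδ => hQε (hQ i hδ.2.le hQδ)
  obtain ⟨ε, hε, hnot⟩ := hsmall.exists
  obtain ⟨i, hi, hQi⟩ := h ε hε
  exact hnot i hi hQi

theorem omegaBarSeq_eq_iUnion_residues {X : Type*} [MetricSpace X] (u : ℕ → X) {m : ℕ}
    (hm : 0 < m) :
    omegaBarSeq u = ⋃ i ∈ Finset.range m, omegaBarSeq (fun j => u (m * j + i)) := by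
  ext y
  simp only [omegaBarSeq, mem_iUnion, exists_prop, Set.mem_ofPred_eq]
  constructor
  · intro hy
    have hmono : ∀ i, Monotone fun ε => 0 < upperDensity {j | dist (u (m * j + i)) y < ε} := by
      intro i ε ε' hεε' hpos
      exact hpos.trans_le (upperDensity_mono fun _ hj => hj.trans_le hεε')
    apply exists_forall_pos_of_forall_pos_exists hmono
    intro ε hε
    -- a plain `exact` would check `m * j + i ∈ {k | …}` against `dist … < ε` by unfolding
    -- `upperDensity`; elaborating the term on its own avoids that
    have hres := (upperDensity_pos_iff_exists_residue _ hm).1 (hy ε hε)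
    exact hres
  · rintro ⟨i, hi, hy⟩ ε hε
    exact (upperDensity_pos_iff_exists_residue _ hm).2 ⟨i, hi, hy ε hε⟩

theorem stmt8_general {X : Type*} [MetricSpace X] (f : X → X)
    (x : X) (m : ℕ) (hm : 1 ≤ m) :
    omegaBar f x = ⋃ i ∈ Finset.range m, omegaBar (f^[m]) (f^[i] x) := by
  rw [omegaBar, omegaBarSeq_eq_iUnion_residues _ hm]
  simp only [omegaBar, Function.iterate_add_apply, Function.iterate_mul]

theorem stmt8 {X : Type*} [MetricSpace X] [CompactSpace X] (f : X → X) (hf : Continuous f)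
    (x : X) (m : ℕ) (hm : 1 ≤ m) :
    omegaBar f x = ⋃ i ∈ Finset.range m, omegaBar (f^[m]) (f^[i] x) :=
  stmt8_general f x m hm
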